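/- arXiv:2301.07572 — 3 statements merged into one kernel-verified Lean document; each statement's English description precedes it below -/
import Mathlib

section
/- Let $\widehat{R}_0$ be a complete discrete valuation ring with uniformizer $t$, fraction field $F_0$ with the $t$-adic absolute value. Let $V \subseteq \widehat{R}_0$ be a $t$-adically complete submodule with $V \cap t\widehat{R}_0 = tV$. Then $V[1/t]$ is closed in $F_0$; in particular, if $F_0$ is complete, $V[1/t]$ is a complete normed space over the subfield $K$ of $F_0$. -/
/-!
Write `x ∈ F₀` as `r / tᵐ` with `r ∈ R̂₀`. If `x` is a limit of elements of `V[1/t]`, then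
for every `k` there is `b_k ∈ V` with `tᵏ ∣ r - b_k`. Because `V ∩ tᵐR̂₀ = tᵐV`, the differences
`b_m - b_n` (`m ≤ n`) lie in `tᵐV`, so `(b_k)` is `t`-adically Cauchy in `V` and converges to some
`L ∈ V`. Then every power of `t` divides `r - L`, so `r = L` and `x = L / tᵐ ∈ V[1/t]`.
Completeness of `V[1/t]` follows from closedness and completeness of `F₀`.
-/

theorem eq_zero_of_forall_pow_dvd {M : Type*} [CommMonoidWithZero M] [IsCancelMulZero M]
    [WfDvdMonoid M] {p r : M} (hp : ¬IsUnit p) (h : ∀ n : ℕ, p ^ n ∣ r) : r = 0 := by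
  by_contra hr
  obtain ⟨n, hn⟩ := FiniteMultiplicity.of_not_isUnit hp hr
  exact hn (h (n + 1))

theorem Submodule.mem_span_singleton_pow_smul_top_iff {T M : Type*} [CommRing T]
    [AddCommGroup M] [Module T M] (t : T) (n : ℕ) (x : M) :
    x ∈ Ideal.span {t} ^ n • (⊤ : Submodule T M) ↔ ∃ y : M, t ^ n • y = x := by
  rw [Ideal.span_singleton_pow, Submodule.ideal_span_singleton_smul,
    Submodule.mem_smul_pointwise_iff_exists]
  simp

section DivisibleSubmodule

variable {T R : Type*} [CommRing T] [CommRing R] [IsDomain R] [Algebra T R] {t0 : T}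
  {V : Submodule T R}

theorem exists_mem_eq_pow_mul_of_dvd (ht0 : algebraMap T R t0 ≠ 0)
    (hV : ∀ x ∈ V, algebraMap T R t0 ∣ x → ∃ a ∈ V, x = algebraMap T R t0 * a)
    (m : ℕ) {x : R} (hx : x ∈ V) (hdvd : algebraMap T R t0 ^ m ∣ x) :
    ∃ a ∈ V, x = algebraMap T R t0 ^ m * a := by
  induction m generalizing x with
  | zero => exact ⟨x, hx, by simp⟩
  | succ m ih =>
    obtain ⟨w, rfl⟩ := hdvd
    obtain ⟨a, ha, hxa⟩ := hV _ hx ⟨algebraMap T R t0 ^ m * w, by ring⟩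
    have haw : a = algebraMap T R t0 ^ m * w :=
      mul_left_cancel₀ ht0 (by rw [← hxa]; ring)
    obtain ⟨b, hb, rfl⟩ := ih ha ⟨w, haw⟩
    exact ⟨b, hb, by rw [hxa]; ring⟩

theorem exists_mem_forall_pow_dvd_sub [IsPrecomplete (Ideal.span {t0}) V]
    (ht0 : algebraMap T R t0 ≠ 0)
    (hV : ∀ x ∈ V, algebraMap T R t0 ∣ x → ∃ a ∈ V, x = algebraMap T R t0 * a) {r : R}
    (happrox : ∀ k : ℕ, ∃ b ∈ V, algebraMap T R t0 ^ k ∣ r - b) :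
    ∃ L ∈ V, ∀ n : ℕ, algebraMap T R t0 ^ n ∣ r - L := by
  choose b hbV hb using happrox
  have hcauchy : ∀ {m n : ℕ}, m ≤ n → (⟨b m, hbV m⟩ : V) ≡ ⟨b n, hbV n⟩
      [SMOD (Ideal.span {t0} ^ m • ⊤ : Submodule T V)] := by
    intro m n hmn
    have hdvd : algebraMap T R t0 ^ m ∣ b m - b n := by
      have := dvd_sub (dvd_trans (pow_dvd_pow _ hmn) (hb n)) (hb m)
      rwa [sub_sub_sub_cancel_left] at this
    obtain ⟨c, hc, hbc⟩ :=
      exists_mem_eq_pow_mul_of_dvd ht0 hV m (V.sub_mem (hbV m) (hbV n)) hdvd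
    rw [SModEq.sub_mem, Submodule.mem_span_singleton_pow_smul_top_iff]
    exact ⟨⟨c, hc⟩, Subtype.ext (by simp [Algebra.smul_def, hbc])⟩
  obtain ⟨L, hL⟩ := IsPrecomplete.prec inferInstance hcauchy
  refine ⟨L, L.2, fun n => ?_⟩
  obtain ⟨c, hc⟩ := (Submodule.mem_span_singleton_pow_smul_top_iff _ _ _).mp
    (SModEq.sub_mem.mp (hL n))
  have hc' : b n - L = algebraMap T R t0 ^ n * c := by
    simpa [Algebra.smul_def] using (congrArg Subtype.val hc).symm
  rw [← sub_add_sub_cancel r (b n), hc']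
  exact dvd_add (hb n) (dvd_mul_right _ _)

end DivisibleSubmodule

section AbsoluteValue

variable {R F0 : Type*} [CommRing R] [Field F0] [Algebra R F0] {ϖ : R} {tF : F0} {α : ℝ}
  {v : AbsoluteValue F0 ℝ}

theorem exists_mul_pow_eq_algebraMap [IsDomain R] [IsDiscreteValuationRing R] [IsFractionRing R F0] (hϖ : Irreducible ϖ)
    (htF : tF = algebraMap R F0 ϖ) (x : F0) :
    ∃ (m : ℕ) (r : R), x * tF ^ m = algebraMap R F0 r := by
  obtain ⟨⟨a, b⟩, hab⟩ := IsLocalization.surj (nonZeroDivisors R) x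
  obtain ⟨m, u, hb⟩ :=
    IsDiscreteValuationRing.eq_unit_mul_pow_irreducible (nonZeroDivisors.coe_ne_zero b) hϖ
  refine ⟨m, ↑u⁻¹ * a, ?_⟩
  have hu : algebraMap R F0 (u : R) * algebraMap R F0 ↑u⁻¹ = 1 := by
    rw [← map_mul, Units.mul_inv, map_one]
  simp only [hb, map_mul, map_pow, ← htF] at hab
  rw [map_mul]
  linear_combination (algebraMap R F0 ↑u⁻¹) * hab - x * tF ^ m * hu

theorem absoluteValue_pow_eq
    (hv : ∀ (n : ℤ) (u : Rˣ), v (tF ^ n * algebraMap R F0 (u : R)) = α ^ (-n)) (m : ℕ) :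
    v (tF ^ m) = α ^ (-(m : ℤ)) := by
  simpa using hv m 1

theorem pow_dvd_of_absoluteValue_lt [IsDomain R] [IsDiscreteValuationRing R] (hϖ : Irreducible ϖ) (htF : tF = algebraMap R F0 ϖ)
    (hα : 1 < α) (hv : ∀ (n : ℤ) (u : Rˣ), v (tF ^ n * algebraMap R F0 (u : R)) = α ^ (-n))
    {r : R} {k : ℕ} (hr : v (algebraMap R F0 r) < α ^ (-(k : ℤ))) : ϖ ^ k ∣ r := by
  rcases eq_or_ne r 0 with rfl | hr0
  · exact dvd_zero _
  obtain ⟨n, u, rfl⟩ := IsDiscreteValuationRing.eq_unit_mul_pow_irreducible hr0 hϖ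
  have hvr : v (algebraMap R F0 (u * ϖ ^ n)) = α ^ (-(n : ℤ)) := by
    rw [map_mul, map_pow, ← htF, mul_comm, ← zpow_natCast, hv]
  rw [hvr, zpow_lt_zpow_iff_right₀ hα, neg_lt_neg_iff, Nat.cast_lt] at hr
  exact Dvd.dvd.mul_left (pow_dvd_pow ϖ hr.le) _

end AbsoluteValue

section Closed

variable {T R F0 : Type*} [CommRing T] [CommRing R] [IsDomain R] [IsDiscreteValuationRing R]
  [Algebra T R] [Field F0] [Algebra R F0] {t0 : T} {V : Submodule T R} {tF : F0} {α : ℝ}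
  {v : AbsoluteValue F0 ℝ}

theorem exists_mem_pow_dvd_sub_of_absoluteValue_lt (ht : Irreducible (algebraMap T R t0))
    (htF : tF = algebraMap R F0 (algebraMap T R t0)) (hα : 1 < α)
    (hv : ∀ (n : ℤ) (u : Rˣ), v (tF ^ n * algebraMap R F0 (u : R)) = α ^ (-n))
    (hV : ∀ x ∈ V, algebraMap T R t0 ∣ x → ∃ a ∈ V, x = algebraMap T R t0 * a)
    {r a : R} {z : F0} {m k : ℕ} (ha : a ∈ V) (hz : z * tF ^ m = algebraMap R F0 a)
    (hrz : v (algebraMap R F0 r - z) < α ^ (-(k : ℤ))) :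
    ∃ b ∈ V, algebraMap T R t0 ^ k ∣ r - b := by
  set π := algebraMap T R t0
  have hα0 : 0 < α := one_pos.trans hα
  have hs : v (algebraMap R F0 (r * π ^ m - a)) < α ^ (-((k + m : ℕ) : ℤ)) := by
    calc v (algebraMap R F0 (r * π ^ m - a)) = v (algebraMap R F0 r - z) * α ^ (-(m : ℤ)) := by
          rw [← absoluteValue_pow_eq hv, ← map_mul, map_sub, map_mul, map_pow, ← htF, ← hz]
          ring_nf
      _ < α ^ (-(k : ℤ)) * α ^ (-(m : ℤ)) := mul_lt_mul_of_pos_right hrz (zpow_pos hα0 _)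
      _ = α ^ (-((k + m : ℕ) : ℤ)) := by rw [← zpow_add₀ hα0.ne']; push_cast; ring_nf
  obtain ⟨w, hw⟩ := pow_dvd_of_absoluteValue_lt ht htF hα hv hs
  obtain ⟨b, hb, hab⟩ := exists_mem_eq_pow_mul_of_dvd ht.ne_zero hV m ha
    ⟨r - π ^ k * w, by linear_combination -hw⟩
  refine ⟨b, hb, w, mul_left_cancel₀ (pow_ne_zero m ht.ne_zero) ?_⟩
  linear_combination hw + hab

theorem mem_of_forall_absoluteValue_sub_lt [IsFractionRing R F0]
    [IsPrecomplete (Ideal.span {t0}) V] (ht : Irreducible (algebraMap T R t0))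
    (htF : tF = algebraMap R F0 (algebraMap T R t0)) (hα : 1 < α)
    (hv : ∀ (n : ℤ) (u : Rˣ), v (tF ^ n * algebraMap R F0 (u : R)) = α ^ (-n))
    (hV : ∀ x ∈ V, algebraMap T R t0 ∣ x → ∃ a ∈ V, x = algebraMap T R t0 * a) {x : F0}
    (hx : ∀ ε : ℝ, 0 < ε → ∃ y : F0,
      (∃ (m : ℕ) (a : R), a ∈ V ∧ y * tF ^ m = algebraMap R F0 a) ∧ v (x - y) < ε) :
    ∃ (m : ℕ) (a : R), a ∈ V ∧ x * tF ^ m = algebraMap R F0 a := by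
  obtain ⟨m₀, r, hr⟩ := exists_mul_pow_eq_algebraMap ht htF x
  have happrox : ∀ k : ℕ, ∃ b ∈ V, algebraMap T R t0 ^ k ∣ r - b := by
    intro k
    obtain ⟨y, ⟨m, a, ha, hy⟩, hxy⟩ := hx _ (zpow_pos (one_pos.trans hα) (-(k : ℤ)))
    refine exists_mem_pow_dvd_sub_of_absoluteValue_lt (z := tF ^ m₀ * y) (m := m) ht htF hα hv hV
      (V.smul_mem (t0 ^ m₀) ha) ?_ ?_
    · rw [Algebra.smul_def, map_mul, map_pow, map_pow, ← htF, ← hy]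
      ring
    · calc v (algebraMap R F0 r - tF ^ m₀ * y) = v (tF ^ m₀) * v (x - y) := by
            rw [← hr, ← map_mul]
            ring_nf
        _ ≤ v (x - y) := by
            refine mul_le_of_le_one_left (v.nonneg _) ?_
            rw [absoluteValue_pow_eq hv]
            exact zpow_le_one_of_nonpos₀ hα.le (by simp)
        _ < _ := hxy
  obtain ⟨L, hL, hrL⟩ := exists_mem_forall_pow_dvd_sub ht.ne_zero hV happrox
  exact ⟨m₀, L, hL, by rw [hr, sub_eq_zero.mp (eq_zero_of_forall_pow_dvd ht.not_isUnit hrL)]⟩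

end Closed

theorem stmt_3_general (T R : Type) [CommRing T] [CommRing R] [Algebra T R]
    [IsDomain R] [IsDiscreteValuationRing R]
    (t0 : T) (ht : Irreducible (algebraMap T R t0))
    (F0 : Type) [Field F0] [Algebra R F0] [IsFractionRing R F0]
    (tF : F0) (htF : tF = algebraMap R F0 (algebraMap T R t0))
    (α : ℝ) (hα : 1 < α) (v : AbsoluteValue F0 ℝ)
    (hv : ∀ (n : ℤ) (u : Rˣ), v (tF ^ n * algebraMap R F0 (u : R)) = α ^ (-n))
    (V : Submodule T R)
    [IsAdicComplete (Ideal.span {t0} : Ideal T) V]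
    (hV : ∀ x : R, (x ∈ V ∧ x ∈ Ideal.span {algebraMap T R t0}) ↔
      ∃ a ∈ V, x = algebraMap T R t0 * a) :
    -- V[1/t] is closed in F₀:
    (∀ x : F0,
      (∀ ε : ℝ, 0 < ε → ∃ y : F0,
        (∃ (m : ℕ) (a : R), a ∈ V ∧ y * tF ^ m = algebraMap R F0 a) ∧ v (x - y) < ε) →
      (∃ (m : ℕ) (a : R), a ∈ V ∧ x * tF ^ m = algebraMap R F0 a)) ∧
    -- if F₀ is complete, V[1/t] is complete:
    ((∀ u : ℕ → F0,
        (∀ ε : ℝ, 0 < ε → ∃ N, ∀ p ≥ N, ∀ q ≥ N, v (u p - u q) < ε) →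
        ∃ l : F0, ∀ ε : ℝ, 0 < ε → ∃ N, ∀ p ≥ N, v (u p - l) < ε) →
      ∀ u : ℕ → F0,
        (∀ p : ℕ, ∃ (m : ℕ) (a : R), a ∈ V ∧ u p * tF ^ m = algebraMap R F0 a) →
        (∀ ε : ℝ, 0 < ε → ∃ N, ∀ p ≥ N, ∀ q ≥ N, v (u p - u q) < ε) →
        ∃ l : F0, (∃ (m : ℕ) (a : R), a ∈ V ∧ l * tF ^ m = algebraMap R F0 a) ∧
          ∀ ε : ℝ, 0 < ε → ∃ N, ∀ p ≥ N, v (u p - l) < ε) := by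
  have hV' : ∀ x ∈ V, algebraMap T R t0 ∣ x → ∃ a ∈ V, x = algebraMap T R t0 * a :=
    fun x hx hdvd => (hV x).mp ⟨hx, Ideal.mem_span_singleton.mpr hdvd⟩
  have hclosed := fun x => mem_of_forall_absoluteValue_sub_lt (x := x) ht htF hα hv hV'
  refine ⟨hclosed, fun hcomplete u hu hcauchy => ?_⟩
  obtain ⟨l, hl⟩ := hcomplete u hcauchy
  refine ⟨l, hclosed l fun ε hε => ?_, hl⟩
  obtain ⟨N, hN⟩ := hl ε hε
  exact ⟨u N, hu N, by simpa only [v.map_sub] using hN N le_rfl⟩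

theorem stmt_3 (T R : Type) [CommRing T] [CommRing R] [Algebra T R]
    [IsDomain R] [IsDiscreteValuationRing R]
    (t0 : T) (ht : Irreducible (algebraMap T R t0))
    [IsAdicComplete (Ideal.span {algebraMap T R t0}) R]
    (F0 : Type) [Field F0] [Algebra R F0] [IsFractionRing R F0]
    (tF : F0) (htF : tF = algebraMap R F0 (algebraMap T R t0))
    (α : ℝ) (hα : 1 < α) (v : AbsoluteValue F0 ℝ)
    (hv : ∀ (n : ℤ) (u : Rˣ), v (tF ^ n * algebraMap R F0 (u : R)) = α ^ (-n))
    (V : Submodule T R)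
    [IsAdicComplete (Ideal.span {t0} : Ideal T) V]
    (hV : ∀ x : R, (x ∈ V ∧ x ∈ Ideal.span {algebraMap T R t0}) ↔
      ∃ a ∈ V, x = algebraMap T R t0 * a) :
    -- V[1/t] is closed in F₀:
    (∀ x : F0,
      (∀ ε : ℝ, 0 < ε → ∃ y : F0,
        (∃ (m : ℕ) (a : R), a ∈ V ∧ y * tF ^ m = algebraMap R F0 a) ∧ v (x - y) < ε) →
      (∃ (m : ℕ) (a : R), a ∈ V ∧ x * tF ^ m = algebraMap R F0 a)) ∧
    -- if F₀ is complete, V[1/t] is complete: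
    ((∀ u : ℕ → F0,
        (∀ ε : ℝ, 0 < ε → ∃ N, ∀ p ≥ N, ∀ q ≥ N, v (u p - u q) < ε) →
        ∃ l : F0, ∀ ε : ℝ, 0 < ε → ∃ N, ∀ p ≥ N, v (u p - l) < ε) →
      ∀ u : ℕ → F0,
        (∀ p : ℕ, ∃ (m : ℕ) (a : R), a ∈ V ∧ u p * tF ^ m = algebraMap R F0 a) →
        (∀ ε : ℝ, 0 < ε → ∃ N, ∀ p ≥ N, ∀ q ≥ N, v (u p - u q) < ε) →
        ∃ l : F0, (∃ (m : ℕ) (a : R), a ∈ V ∧ l * tF ^ m = algebraMap R F0 a) ∧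
          ∀ ε : ℝ, 0 < ε → ∃ N, ∀ p ≥ N, v (u p - l) < ε) :=
  stmt_3_general T R t0 ht F0 tF htF α hα v hv V hV
end

section
/- Let $k$ be a field, $T = k[[t]]$, $\widehat{R}_P = k[[t, x^{-1}]]$ and $\widehat{R}_{\mathfrak{p}} = k((x^{-1}))[[t]]$. Set $V = \operatorname{Frac}(\widehat{R}_P) \cap \widehat{R}_{\mathfrak{p}}$ and let $W = F_U \cap \widehat{R}_{\mathfrak{p}}$ where $F_U = k(x)((t)) = \operatorname{Frac}(k[x][[t]])$. Then every element $f \in \widehat{R}_{\mathfrak{p}}$ can be written as $f = f_1 + f_2$ with $f_1 \in V$ and $f_2 \in W$; that is, $V + W = \widehat{R}_{\mathfrak{p}}$. -/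
noncomputable section

/- STATEMENT 5: with `t` the power series variable and `X = x⁻¹` the Laurent series
variable, we work inside `F_𝔭 = k((x⁻¹))((t))`, containing `R̂_𝔭 = k((x⁻¹))[[t]]`.
`V = Frac(k[[t,x⁻¹]]) ∩ R̂_𝔭` and `W = k(x)((t)) ∩ R̂_𝔭 = Frac(k[x][[t]]) ∩ R̂_𝔭`.
Then `V + W = R̂_𝔭`. -/

variable (k : Type) [Field k]

/-- `R̂_𝔭 = k((x⁻¹))[[t]] ↪ F_𝔭 = k((x⁻¹))((t))`. -/
def iotaP : PowerSeries (LaurentSeries k) →+* LaurentSeries (LaurentSeries k) :=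
  HahnSeries.ofPowerSeries ℤ (LaurentSeries k)

/-- `R̂_P = k[[t, x⁻¹]] = k[[x⁻¹]][[t]] ↪ F_𝔭`. -/
def phiA : PowerSeries (PowerSeries k) →+* LaurentSeries (LaurentSeries k) :=
  (iotaP k).comp (PowerSeries.map (HahnSeries.ofPowerSeries ℤ k))

/-- `k[x] ↪ k((x⁻¹))`, sending `x` to the inverse of the Laurent series variable. -/
def psiPoly : Polynomial k →+* LaurentSeries k :=
  Polynomial.eval₂RingHom (algebraMap k (LaurentSeries k))
    (HahnSeries.single (1 : ℤ) (1 : k))⁻¹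

/-- `k[x][[t]] ↪ F_𝔭`. -/
def phiB : PowerSeries (Polynomial k) →+* LaurentSeries (LaurentSeries k) :=
  (iotaP k).comp (PowerSeries.map (psiPoly k))

/-!
Each `t`-coefficient of `g` is a Laurent series in `X = x⁻¹`; it splits into its part with
nonnegative exponents, a power series in `X`, and its finitely many terms with negative exponents,
a polynomial in `x`. Doing this coefficientwise writes `g` as an element of `k[[X]][[t]]` plus an
element of `k[x][[t]]`; both lie in `R̂_𝔭` and trivially in the respective fraction fields.
-/

open HahnSeries

namespace LaurentSeries

variable {R : Type*} [Semiring R]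

def nonnegPart (L : LaurentSeries R) : PowerSeries R :=
  PowerSeries.mk fun n => L.coeff n

/-- The terms of negative `X`-degree of a Laurent series in `X`, as a polynomial in `x = X⁻¹`. -/
def principalPart (L : LaurentSeries R) : Polynomial R :=
  ∑ n ∈ Finset.Ico L.order 0, Polynomial.C (L.coeff n) * Polynomial.X ^ n.natAbs

theorem coeff_coe_nonnegPart (L : LaurentSeries R) (i : ℤ) :
    (L.nonnegPart : LaurentSeries R).coeff i = if i < 0 then 0 else L.coeff i := by
  rw [PowerSeries.coeff_coe]
  split_ifs with hi
  · rfl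
  · rw [nonnegPart, PowerSeries.coeff_mk, Int.natCast_natAbs, abs_of_nonneg (not_lt.1 hi)]

theorem coe_nonnegPart_add_sum_single (L : LaurentSeries R) :
    (L.nonnegPart : LaurentSeries R) + ∑ n ∈ Finset.Ico L.order 0, single n (L.coeff n) = L := by
  ext i
  rw [coeff_add, coeff_sum, coeff_coe_nonnegPart]
  by_cases hi : i ∈ Finset.Ico L.order 0
  · rw [Finset.sum_eq_single_of_mem i hi fun n _ hn => coeff_single_of_ne hn.symm,
      coeff_single_same, if_pos (Finset.mem_Ico.1 hi).2, zero_add]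
  · rw [Finset.sum_eq_zero fun n hn => coeff_single_of_ne (ne_of_mem_of_not_mem hn hi).symm,
      add_zero]
    split_ifs with hneg
    · exact (coeff_eq_zero_of_lt_order (not_le.1 fun h => hi (Finset.mem_Ico.2 ⟨h, hneg⟩))).symm
    · rfl

end LaurentSeries

section

variable {k}

theorem psiPoly_C_mul_X_pow (c : k) (m : ℕ) :
    psiPoly k (Polynomial.C c * Polynomial.X ^ m) = single (-m : ℤ) c := by
  have hX : psiPoly k Polynomial.X = single (-1) 1 := by simp [psiPoly, inv_single]
  have hC : psiPoly k (Polynomial.C c) = single 0 c := by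
    simp [psiPoly, LaurentSeries.algebraMap_apply, C_apply]
  rw [map_mul, map_pow, hX, hC, single_pow, single_mul_single]
  simp

theorem psiPoly_principalPart (L : LaurentSeries k) :
    psiPoly k L.principalPart = ∑ n ∈ Finset.Ico L.order 0, single n (L.coeff n) := by
  rw [LaurentSeries.principalPart, map_sum]
  refine Finset.sum_congr rfl fun n hn => ?_
  rw [psiPoly_C_mul_X_pow, Int.natCast_natAbs, abs_of_neg (Finset.mem_Ico.1 hn).2, neg_neg]

theorem coe_nonnegPart_add_psiPoly_principalPart (L : LaurentSeries k) :
    (L.nonnegPart : LaurentSeries k) + psiPoly k L.principalPart = L := by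
  rw [psiPoly_principalPart, L.coe_nonnegPart_add_sum_single]

theorem exists_iotaP_eq_phiA_add_phiB (g : PowerSeries (LaurentSeries k)) :
    ∃ a b, iotaP k g = phiA k a + phiB k b := by
  refine ⟨PowerSeries.mk fun i => (PowerSeries.coeff i g).nonnegPart,
    PowerSeries.mk fun i => (PowerSeries.coeff i g).principalPart, ?_⟩
  rw [phiA, phiB, RingHom.comp_apply, RingHom.comp_apply, ← map_add]
  congr 1
  ext i
  simp [coe_nonnegPart_add_psiPoly_principalPart]

end

theorem stmt_5 :
    ∀ g : PowerSeries (LaurentSeries k),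
      ∃ f1 f2 : LaurentSeries (LaurentSeries k),
        -- f1 ∈ V = Frac(R̂_P) ∩ R̂_𝔭 :
        (∃ a b : PowerSeries (PowerSeries k), phiA k b ≠ 0 ∧ f1 * phiA k b = phiA k a) ∧
        (∃ h : PowerSeries (LaurentSeries k), f1 = iotaP k h) ∧
        -- f2 ∈ W = Frac(k[x][[t]]) ∩ R̂_𝔭 :
        (∃ a b : PowerSeries (Polynomial k), phiB k b ≠ 0 ∧ f2 * phiB k b = phiB k a) ∧
        (∃ h : PowerSeries (LaurentSeries k), f2 = iotaP k h) ∧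
        -- f = f1 + f2 :
        iotaP k g = f1 + f2 := by
  intro g
  obtain ⟨a, b, hg⟩ := exists_iotaP_eq_phiA_add_phiB g
  exact ⟨phiA k a, phiB k b, ⟨a, 1, by simp, by simp⟩, ⟨_, rfl⟩, ⟨b, 1, by simp, by simp⟩,
    ⟨_, rfl⟩, hg⟩

end
end

section
/- Let $F \subseteq F_1, F_2 \subseteq F_0$ be fields with $F = F_1 \cap F_2$, and let $G$ be a linear algebraic group over $F$ acting on an $F$-variety $Z$ such that for every overfield $L$ of $F$, $G(L)$ acts transitively on $Z(L)$. Suppose $G(F_0) = G(F_1) \cdot G(F_2)$ (product of subgroups inside $G(F_0)$). If $Z(F_1) \neq \emptyset$ and $Z(F_2) \neq \emptyset$, then $Z(F) \neq \emptyset$. -/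
/- STATEMENT 15: abstract group-theoretic patching.  `G₀ = G(F₀)` acts transitively on
`Z₀ = Z(F₀)`; `H₁ = G(F₁)`, `H₂ = G(F₂)` are subgroups with `G₀ = H₁ ⋅ H₂`;
`S₁ = Z(F₁)`, `S₂ = Z(F₂)` are nonempty subsets stable under `H₁`, `H₂` respectively,
and `Z(F) = S₁ ∩ S₂` (since `F = F₁ ∩ F₂`).  Then `Z(F) ≠ ∅`. -/
theorem stmt_15 (G : Type) [Group G] (Z : Type) [MulAction G Z]
    (H1 H2 : Subgroup G) (S1 S2 : Set Z)
    (htrans : ∀ x y : Z, ∃ g : G, g • x = y)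
    (hdec : ∀ g : G, ∃ g1 ∈ H1, ∃ g2 ∈ H2, g = g1 * g2)
    (hstab1 : ∀ g ∈ H1, ∀ x ∈ S1, g • x ∈ S1)
    (hstab2 : ∀ g ∈ H2, ∀ x ∈ S2, g • x ∈ S2)
    (h1 : S1.Nonempty) (h2 : S2.Nonempty) :
    (S1 ∩ S2).Nonempty := by
  obtain ⟨x1, hx1⟩ := h1
  obtain ⟨x2, hx2⟩ := h2
  obtain ⟨g, hg⟩ := htrans x2 x1
  obtain ⟨g1, hg1, g2, hg2, hprod⟩ := hdec g
  refine ⟨g2 • x2, ?_, hstab2 g2 hg2 x2 hx2⟩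
  have : g2 • x2 = g1⁻¹ • x1 := by
    rw [← hg, hprod, mul_smul, inv_smul_smul]
  rw [this]
  exact hstab1 g1⁻¹ (H1.inv_mem hg1) x1 hx1
end
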